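/- arXiv:2008.08249 — 3 statements merged into one kernel-verified Lean document; each statement's English description precedes it below -/
import Mathlib

section
/- For every real q > 0, all natural numbers d, m ≥ 1, every x, a ∈ ℝ^d and every d×m real matrix A, the following pointwise inequality holds: (1+|x|²)^{q/2−2}·[(1+|x|²)·(2⟨x,a⟩ + |A|²) + (q−2)·|Aᵀx|²] ≤ (1+|x|²)^{q/2−1}·(2⟨x,a⟩ + max(q−1,1)·|A|²), where |Aᵀx| denotes the Euclidean norm of the vector Aᵀx ∈ ℝ^m. -/
/-!
After factoring out `(1 + ‖x‖²) ^ (q/2 - 2)`, the inequality reduces to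
`(q - 2) ‖Aᵀx‖² ≤ max (q - 2) 0 · ‖A‖² (1 + ‖x‖²)`, which follows from the Cauchy–Schwarz bound
`‖Aᵀx‖ ≤ ‖A‖ ‖x‖` for the Frobenius norm.
-/

open scoped RealInnerProductSpace

noncomputable def frobNorm {n k : ℕ} (A : Matrix (Fin n) (Fin k) ℝ) : ℝ :=
  Real.sqrt (∑ i, ∑ j, (A i j) ^ 2)

noncomputable def mvec {n k : ℕ} (A : Matrix (Fin n) (Fin k) ℝ)
    (v : EuclideanSpace ℝ (Fin k)) : EuclideanSpace ℝ (Fin n) :=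
  (EuclideanSpace.equiv (Fin n) ℝ).symm (A.mulVec (EuclideanSpace.equiv (Fin k) ℝ v))

open scoped Matrix

section Frobenius

variable {n k : ℕ} (A : Matrix (Fin n) (Fin k) ℝ)

lemma frobNorm_sq : frobNorm A ^ 2 = ∑ i, ∑ j, A i j ^ 2 :=
  Real.sq_sqrt (by positivity)

lemma frobNorm_transpose : frobNorm Aᵀ = frobNorm A := by
  simp only [frobNorm, Matrix.transpose_apply]
  rw [Finset.sum_comm]

lemma norm_sq_eq_sum_sq (v : EuclideanSpace ℝ (Fin k)) : ‖v‖ ^ 2 = ∑ j, v j ^ 2 := by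
  simp only [EuclideanSpace.norm_sq_eq, Real.norm_eq_abs, sq_abs]

lemma norm_sq_mvec_le (v : EuclideanSpace ℝ (Fin k)) :
    ‖mvec A v‖ ^ 2 ≤ frobNorm A ^ 2 * ‖v‖ ^ 2 := by
  have hAv : ‖mvec A v‖ ^ 2 = ∑ i, (∑ j, A i j * v j) ^ 2 := by
    simp [norm_sq_eq_sum_sq, mvec, Matrix.mulVec, dotProduct]
  rw [hAv, frobNorm_sq, norm_sq_eq_sum_sq, Finset.sum_mul]
  exact Finset.sum_le_sum fun i _ => Finset.sum_mul_sq_le_sq_mul_sq _ _ _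

end Frobenius

lemma sub_two_mul_le_max_sub_one_mul {q s t : ℝ} (hs : 0 ≤ s) (hst : s ≤ t) :
    (q - 2) * s ≤ (max (q - 1) 1 - 1) * t := by
  rcases le_total q 2 with hq | hq
  · rw [max_eq_right (by linarith)]
    nlinarith
  · rw [max_eq_left (by linarith)]
    nlinarith

theorem stmt0_general (q : ℝ) (d m : ℕ)
    (x a : EuclideanSpace ℝ (Fin d)) (A : Matrix (Fin d) (Fin m) ℝ) :
    (1 + ‖x‖ ^ 2) ^ (q / 2 - 2) *
        ((1 + ‖x‖ ^ 2) * (2 * ⟪x, a⟫ + frobNorm A ^ 2)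
          + (q - 2) * ‖mvec A.transpose x‖ ^ 2)
      ≤ (1 + ‖x‖ ^ 2) ^ (q / 2 - 1) *
          (2 * ⟪x, a⟫ + max (q - 1) 1 * frobNorm A ^ 2) := by
  set S := 1 + ‖x‖ ^ 2
  have hS : 0 < S := by positivity
  have hpow : S ^ (q / 2 - 1) = S ^ (q / 2 - 2) * S := by
    rw [show q / 2 - 1 = (q / 2 - 2) + 1 by ring, Real.rpow_add hS, Real.rpow_one]
  have hAx : ‖mvec Aᵀ x‖ ^ 2 ≤ frobNorm A ^ 2 * S :=
    (norm_sq_mvec_le Aᵀ x).trans (by rw [frobNorm_transpose]; gcongr; linarith)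
  have key := sub_two_mul_le_max_sub_one_mul (q := q) (sq_nonneg _) hAx
  rw [hpow, mul_assoc]
  gcongr
  linear_combination key

theorem stmt0 (q : ℝ) (hq : 0 < q) (d m : ℕ) (hd : 1 ≤ d) (hm : 1 ≤ m)
    (x a : EuclideanSpace ℝ (Fin d)) (A : Matrix (Fin d) (Fin m) ℝ) :
    (1 + ‖x‖ ^ 2) ^ (q / 2 - 2) *
        ((1 + ‖x‖ ^ 2) * (2 * ⟪x, a⟫ + frobNorm A ^ 2)
          + (q - 2) * ‖mvec A.transpose x‖ ^ 2)
      ≤ (1 + ‖x‖ ^ 2) ^ (q / 2 - 1) *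
          (2 * ⟪x, a⟫ + max (q - 1) 1 * frobNorm A ^ 2) :=
  stmt0_general q d m x a A
end

section
/- For every β > 0 and all x, x̄, y, ȳ ∈ ℝ: |x−x̄|·( 2(x−x̄)·((x − 8x³) − (x̄ − 8x̄³)) + β·(|y|^{3/2} − |ȳ|^{3/2})² ) ≤ (2 + β³/3)·|x−x̄|³ + (16/3)·|y−ȳ|³ − 8·|x−x̄|³·(x² + x̄²) + 8·|y−ȳ|³·(y² + ȳ²). -/
/-! The drift `x - 8x³` is one-sided Lipschitz with a cubic gain: `2(x - x̄)(f x - f x̄)` equals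
`2(x - x̄)² - 8(x - x̄)²(x² + x̄²) - 8(x² - x̄²)²`. For the diffusion, Young's inequality
`p q² ≤ p³/3 + 2|q|³/3` with `p = β|x - x̄|` reduces everything to bounding
`||y|^{3/2} - |ȳ|^{3/2}|³`; writing `|y| = a²`, `|ȳ| = b²` this is `|a³ - b³|³`, and
`|a³ - b³| ≤ 2 max(a, b) |a² - b²|` together with `t³ ≤ 1 + t⁴` gives the bound
`8|y - ȳ|³(1 + y² + ȳ²)`. -/

lemma abs_pow_three_sub_pow_three_le {a b : ℝ} (ha : 0 ≤ a) (hb : 0 ≤ b) :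
    |a ^ 3 - b ^ 3| ≤ 2 * max a b * |a ^ 2 - b ^ 2| := by
  wlog hba : b ≤ a generalizing a b
  · simpa only [max_comm, abs_sub_comm] using this hb ha (le_of_not_ge hba)
  rw [max_eq_left hba, abs_of_nonneg (by nlinarith [pow_le_pow_left₀ hb hba 3]),
    abs_of_nonneg (by nlinarith)]
  -- `a³ - b³ = (a - b)(a² + ab + b²)` and `a² + ab + b² ≤ 2a(a + b)`
  nlinarith [mul_nonneg (sub_nonneg.2 hba) (mul_nonneg ha hb),
    mul_nonneg (sub_nonneg.2 hba) (sq_nonneg (a - b)), mul_nonneg ha (sub_nonneg.2 hba)]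

lemma pow_three_le_one_add_pow_four (t : ℝ) : t ^ 3 ≤ 1 + t ^ 4 := by
  nlinarith [sq_nonneg (t ^ 2 - t), sq_nonneg (t - 1), sq_nonneg t]

lemma max_pow_three_le (a b : ℝ) : max a b ^ 3 ≤ 1 + a ^ 4 + b ^ 4 := by
  have ha := pow_three_le_one_add_pow_four a
  have hb := pow_three_le_one_add_pow_four b
  have ha4 : 0 ≤ a ^ 4 := by positivity
  have hb4 : 0 ≤ b ^ 4 := by positivity
  rcases max_choice a b with h | h <;> rw [h] <;> linarith

lemma abs_rpow_three_halves_sub_pow_three_le {u v : ℝ} (hu : 0 ≤ u) (hv : 0 ≤ v) :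
    |u ^ ((3 : ℝ) / 2) - v ^ ((3 : ℝ) / 2)| ^ 3 ≤ 8 * |u - v| ^ 3 * (1 + u ^ 2 + v ^ 2) := by
  obtain ⟨a, ha, rfl⟩ : ∃ a, 0 ≤ a ∧ u = a ^ 2 := ⟨√u, Real.sqrt_nonneg u, (Real.sq_sqrt hu).symm⟩
  obtain ⟨b, hb, rfl⟩ : ∃ b, 0 ≤ b ∧ v = b ^ 2 := ⟨√v, Real.sqrt_nonneg v, (Real.sq_sqrt hv).symm⟩
  have h32 : ∀ c : ℝ, 0 ≤ c → (c ^ 2) ^ ((3 : ℝ) / 2) = c ^ 3 := fun c hc => by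
    rw [← Real.rpow_natCast, ← Real.rpow_mul hc]; norm_num
  rw [h32 a ha, h32 b hb]
  calc |a ^ 3 - b ^ 3| ^ 3 ≤ (2 * max a b * |a ^ 2 - b ^ 2|) ^ 3 :=
        pow_le_pow_left₀ (abs_nonneg _) (abs_pow_three_sub_pow_three_le ha hb) 3
    _ = 8 * |a ^ 2 - b ^ 2| ^ 3 * max a b ^ 3 := by ring
    _ ≤ 8 * |a ^ 2 - b ^ 2| ^ 3 * (1 + (a ^ 2) ^ 2 + (b ^ 2) ^ 2) := by
        gcongr; simpa only [← pow_mul] using max_pow_three_le a b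

lemma mul_sq_le_young {p : ℝ} (hp : 0 ≤ p) (q : ℝ) : p * q ^ 2 ≤ p ^ 3 / 3 + 2 * |q| ^ 3 / 3 := by
  rw [← sq_abs q]
  nlinarith [mul_nonneg (sq_nonneg (p - |q|)) (add_nonneg hp (mul_nonneg zero_le_two (abs_nonneg q)))]

lemma two_mul_sub_mul_sub_cubic_le {c : ℝ} (hc : 0 ≤ c) (x xb : ℝ) :
    2 * (x - xb) * ((x - c * x ^ 3) - (xb - c * xb ^ 3))
      ≤ 2 * (x - xb) ^ 2 - c * (x - xb) ^ 2 * (x ^ 2 + xb ^ 2) := by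
  have key : 2 * (x - xb) * ((x - c * x ^ 3) - (xb - c * xb ^ 3))
      = 2 * (x - xb) ^ 2 - c * (x - xb) ^ 2 * (x ^ 2 + xb ^ 2) - c * (x ^ 2 - xb ^ 2) ^ 2 := by
    ring
  rw [key]
  nlinarith [mul_nonneg hc (sq_nonneg (x ^ 2 - xb ^ 2))]

/-- Verification of condition (H6) with `r = 3` and `V̂(x,x̄) = 8|x−x̄|³(x²+x̄²)` for the
SDDE with drift `x − 8x³` and diffusion `|y|^{3/2}`. -/
theorem stmt7 : ∀ β : ℝ, 0 < β → ∀ x xb y yb : ℝ,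
    |x - xb| * (2 * (x - xb) * ((x - 8 * x ^ 3) - (xb - 8 * xb ^ 3))
        + β * (|y| ^ ((3 : ℝ) / 2) - |yb| ^ ((3 : ℝ) / 2)) ^ 2)
      ≤ (2 + β ^ 3 / 3) * |x - xb| ^ 3 + (16 / 3) * |y - yb| ^ 3
        - 8 * |x - xb| ^ 3 * (x ^ 2 + xb ^ 2) + 8 * |y - yb| ^ 3 * (y ^ 2 + yb ^ 2) := by
  intro β hβ x xb y yb
  have hX : |x - xb| * (x - xb) ^ 2 = |x - xb| ^ 3 := by rw [← sq_abs (x - xb)]; ring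
  have drift : |x - xb| * (2 * (x - xb) * ((x - 8 * x ^ 3) - (xb - 8 * xb ^ 3)))
      ≤ 2 * |x - xb| ^ 3 - 8 * |x - xb| ^ 3 * (x ^ 2 + xb ^ 2) := by
    calc _ ≤ |x - xb| * (2 * (x - xb) ^ 2 - 8 * (x - xb) ^ 2 * (x ^ 2 + xb ^ 2)) :=
          mul_le_mul_of_nonneg_left (two_mul_sub_mul_sub_cubic_le (by norm_num) x xb)
            (abs_nonneg _)
      _ = _ := by rw [← hX]; ring
  have diffusion : |(|y| ^ ((3 : ℝ) / 2) - |yb| ^ ((3 : ℝ) / 2))| ^ 3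
      ≤ 8 * |y - yb| ^ 3 * (1 + y ^ 2 + yb ^ 2) := by
    calc _ ≤ 8 * |(|y| - |yb|)| ^ 3 * (1 + |y| ^ 2 + |yb| ^ 2) :=
          abs_rpow_three_halves_sub_pow_three_le (abs_nonneg y) (abs_nonneg yb)
      _ ≤ 8 * |y - yb| ^ 3 * (1 + y ^ 2 + yb ^ 2) := by
          rw [sq_abs, sq_abs]; gcongr 8 * ?_ ^ 3 * _; exact abs_abs_sub_abs_le_abs_sub y yb
  have young := mul_sq_le_young (mul_nonneg hβ.le (abs_nonneg (x - xb)))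
    (|y| ^ ((3 : ℝ) / 2) - |yb| ^ ((3 : ℝ) / 2))
  rw [mul_add]
  linarith [show |x - xb| * (β * (|y| ^ ((3 : ℝ) / 2) - |yb| ^ ((3 : ℝ) / 2)) ^ 2)
    = β * |x - xb| * (|y| ^ ((3 : ℝ) / 2) - |yb| ^ ((3 : ℝ) / 2)) ^ 2 by ring,
    show (β * |x - xb|) ^ 3 = β ^ 3 * |x - xb| ^ 3 by ring,
    show 0 ≤ |y - yb| ^ 3 * (y ^ 2 + yb ^ 2) by positivity]
end

section
/- Assume f and g satisfy both condition (H5) with parameters α > 0, K₄ > 0 and condition (H6) with parameters r ≥ 2, β > r−1, K₅ > 0 and V̂. Let κ > 0 satisfy (1+κ)·(r−1) ≤ β. Then for all x, x̃, z, y, ỹ, w ∈ ℝ^d: |x−x̃|^{r−2}·( 2⟨x−x̃, f(x,y) − f(z,w)⟩ + (r−1)·|g(x,y) − g(z,w)|² ) ≤ K₅·(|x−x̃|^r + |y−ỹ|^r) − V̂(x,x̃) + V̂(y,ỹ) + 2K₄·|x−x̃|^{r−1}·(|x̃−z| + |ỹ−w|)·(1 + |x̃|^α + |ỹ|^α + |z|^α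 + |w|^α) + (1 + 1/κ)·(r−1)·K₄·|x−x̃|^{r−2}·(|x̃−z|² + |ỹ−w|²)·(1 + |x̃|^α + |ỹ|^α + |z|^α + |w|^α). -/
/-!
Split `f(x,y) - f(z,w)` and `g(x,y) - g(z,w)` through the intermediate point `(x̃, ỹ)`.
The diffusion part is separated by Young's inequality
`|A + B|² ≤ (1 + κ)|A|² + (1 + 1/κ)|B|²`, and `(1 + κ)(r - 1) ≤ β` lets (H6) absorb the
terms at `(x, x̃, y, ỹ)`. The remaining terms at `(x̃, z, ỹ, w)` are bounded by (H5),
after Cauchy–Schwarz `|x - x̃|^{r-2} ⟨x - x̃, v⟩ ≤ |x - x̃|^{r-1} |v|` for the drift.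
-/

open scoped RealInnerProductSpace

theorem norm_add_sq_le_of_pos {E : Type*} [SeminormedAddCommGroup E] {κ : ℝ} (hκ : 0 < κ)
    (a b : E) : ‖a + b‖ ^ 2 ≤ (1 + κ) * ‖a‖ ^ 2 + (1 + 1 / κ) * ‖b‖ ^ 2 :=
  calc ‖a + b‖ ^ 2
    _ ≤ (‖a‖ + ‖b‖) ^ 2 := by grw [norm_add_le a b]
    _ = ‖a‖ ^ 2 + ‖b‖ ^ 2 + 2 * ‖a‖ * ‖b‖ := by ring
    _ ≤ ‖a‖ ^ 2 + ‖b‖ ^ 2 + κ * ‖a‖ ^ 2 + κ⁻¹ * ‖b‖ ^ 2 := by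
      simp_rw [add_assoc]
      gcongr
      exact two_mul_le_add_mul_sq hκ
    _ = (1 + κ) * ‖a‖ ^ 2 + (1 + 1 / κ) * ‖b‖ ^ 2 := by ring

theorem rpow_sub_two_mul_inner_le {E : Type*} [NormedAddCommGroup E] [InnerProductSpace ℝ E]
    {r : ℝ} (hr : r ≠ 1) (v u : E) :
    ‖v‖ ^ (r - 2) * ⟪v, u⟫ ≤ ‖v‖ ^ (r - 1) * ‖u‖ := by
  have hr' : r - 2 + 1 ≠ 0 := by contrapose! hr; linarith
  rw [show r - 1 = r - 2 + 1 by ring, Real.rpow_add_one' (norm_nonneg v) hr', mul_assoc]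
  gcongr
  exact real_inner_le_norm v u

section Frobenius

attribute [local instance] Matrix.frobeniusSeminormedAddCommGroup

theorem frobNorm_eq_norm {n k : ℕ} (A : Matrix (Fin n) (Fin k) ℝ) : frobNorm A = ‖A‖ := by
  simp only [frobNorm, Matrix.frobenius_norm_def, Real.sqrt_eq_rpow, Real.rpow_two,
    Real.norm_eq_abs, sq_abs]

theorem frobNorm_add_sq_le {n k : ℕ} {κ : ℝ} (hκ : 0 < κ)
    (A B : Matrix (Fin n) (Fin k) ℝ) :
    frobNorm (A + B) ^ 2 ≤ (1 + κ) * frobNorm A ^ 2 + (1 + 1 / κ) * frobNorm B ^ 2 := by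
  simpa only [frobNorm_eq_norm] using norm_add_sq_le_of_pos hκ A B

end Frobenius

theorem stmt16_general (d m : ℕ)
    (f : EuclideanSpace ℝ (Fin d) → EuclideanSpace ℝ (Fin d) → EuclideanSpace ℝ (Fin d))
    (g : EuclideanSpace ℝ (Fin d) → EuclideanSpace ℝ (Fin d) → Matrix (Fin d) (Fin m) ℝ)
    (α K₄ : ℝ)
    (hH5f : ∀ x xb y yb : EuclideanSpace ℝ (Fin d),
      ‖f x y - f xb yb‖
        ≤ K₄ * (‖x - xb‖ + ‖y - yb‖)
            * (1 + ‖x‖ ^ α + ‖xb‖ ^ α + ‖y‖ ^ α + ‖yb‖ ^ α))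
    (hH5g : ∀ x xb y yb : EuclideanSpace ℝ (Fin d),
      frobNorm (g x y - g xb yb) ^ 2
        ≤ K₄ * (‖x - xb‖ ^ 2 + ‖y - yb‖ ^ 2)
            * (1 + ‖x‖ ^ α + ‖xb‖ ^ α + ‖y‖ ^ α + ‖yb‖ ^ α))
    (r β K₅ : ℝ) (hr : 2 ≤ r)
    (Vhat : EuclideanSpace ℝ (Fin d) → EuclideanSpace ℝ (Fin d) → ℝ)
    (hH6 : ∀ x xb y yb : EuclideanSpace ℝ (Fin d),
      ‖x - xb‖ ^ (r - 2) * (2 * ⟪x - xb, f x y - f xb yb⟫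
          + β * frobNorm (g x y - g xb yb) ^ 2)
        ≤ K₅ * (‖x - xb‖ ^ r + ‖y - yb‖ ^ r) - Vhat x xb + Vhat y yb)
    (κ : ℝ) (hκ : 0 < κ) (hκβ : (1 + κ) * (r - 1) ≤ β) :
    ∀ x xt z y yt w : EuclideanSpace ℝ (Fin d),
      ‖x - xt‖ ^ (r - 2) * (2 * ⟪x - xt, f x y - f z w⟫
          + (r - 1) * frobNorm (g x y - g z w) ^ 2)
        ≤ K₅ * (‖x - xt‖ ^ r + ‖y - yt‖ ^ r) - Vhat x xt + Vhat y yt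
          + 2 * K₄ * ‖x - xt‖ ^ (r - 1) * (‖xt - z‖ + ‖yt - w‖)
              * (1 + ‖xt‖ ^ α + ‖yt‖ ^ α + ‖z‖ ^ α + ‖w‖ ^ α)
          + (1 + 1 / κ) * (r - 1) * K₄ * ‖x - xt‖ ^ (r - 2)
              * (‖xt - z‖ ^ 2 + ‖yt - w‖ ^ 2)
              * (1 + ‖xt‖ ^ α + ‖yt‖ ^ α + ‖z‖ ^ α + ‖w‖ ^ α) := by
  intro x xt z y yt w
  have hr1 : 0 ≤ r - 1 := by linarith
  have hpow_nonneg (s : ℝ) : 0 ≤ ‖x - xt‖ ^ s := by positivity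
  have hinner : ⟪x - xt, f x y - f z w⟫
      = ⟪x - xt, f x y - f xt yt⟫ + ⟪x - xt, f xt yt - f z w⟫ := by
    rw [← inner_add_right, sub_add_sub_cancel]
  have hdiffusion : (r - 1) * frobNorm (g x y - g z w) ^ 2
      ≤ β * frobNorm (g x y - g xt yt) ^ 2
        + (1 + 1 / κ) * (r - 1) * frobNorm (g xt yt - g z w) ^ 2 := by
    have hsplit := frobNorm_add_sq_le hκ (g x y - g xt yt) (g xt yt - g z w)
    rw [sub_add_sub_cancel] at hsplit
    have hβ_absorbs := mul_le_mul_of_nonneg_right hκβ (sq_nonneg (frobNorm (g x y - g xt yt)))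
    linarith [mul_le_mul_of_nonneg_left hsplit hr1, hβ_absorbs]
  have hdrift := rpow_sub_two_mul_inner_le (by linarith : r ≠ 1) (x - xt) (f xt yt - f z w)
  have hdrift_bound := mul_le_mul_of_nonneg_left (hH5f xt z yt w) (hpow_nonneg (r - 1))
  have hdiffusion_bound := mul_le_mul_of_nonneg_left (hH5g xt z yt w)
    (mul_nonneg (hpow_nonneg (r - 2)) (mul_nonneg (by positivity : 0 ≤ 1 + 1 / κ) hr1))
  have hdiffusion_weighted := mul_le_mul_of_nonneg_left hdiffusion (hpow_nonneg (r - 2))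
  rw [hinner]
  linarith [hH6 x xt y yt]

theorem stmt16 (d m : ℕ) (hd : 1 ≤ d) (hm : 1 ≤ m)
    (f : EuclideanSpace ℝ (Fin d) → EuclideanSpace ℝ (Fin d) → EuclideanSpace ℝ (Fin d))
    (g : EuclideanSpace ℝ (Fin d) → EuclideanSpace ℝ (Fin d) → Matrix (Fin d) (Fin m) ℝ)
    (α K₄ : ℝ) (hα : 0 < α) (hK₄ : 0 < K₄)
    (hH5f : ∀ x xb y yb : EuclideanSpace ℝ (Fin d),
      ‖f x y - f xb yb‖
        ≤ K₄ * (‖x - xb‖ + ‖y - yb‖)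
            * (1 + ‖x‖ ^ α + ‖xb‖ ^ α + ‖y‖ ^ α + ‖yb‖ ^ α))
    (hH5g : ∀ x xb y yb : EuclideanSpace ℝ (Fin d),
      frobNorm (g x y - g xb yb) ^ 2
        ≤ K₄ * (‖x - xb‖ ^ 2 + ‖y - yb‖ ^ 2)
            * (1 + ‖x‖ ^ α + ‖xb‖ ^ α + ‖y‖ ^ α + ‖yb‖ ^ α))
    (r β K₅ : ℝ) (hr : 2 ≤ r) (hβ : r - 1 < β) (hK₅ : 0 < K₅)
    (Vhat : EuclideanSpace ℝ (Fin d) → EuclideanSpace ℝ (Fin d) → ℝ)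
    (hVhat : ∀ x xb, 0 ≤ Vhat x xb)
    (hH6 : ∀ x xb y yb : EuclideanSpace ℝ (Fin d),
      ‖x - xb‖ ^ (r - 2) * (2 * ⟪x - xb, f x y - f xb yb⟫
          + β * frobNorm (g x y - g xb yb) ^ 2)
        ≤ K₅ * (‖x - xb‖ ^ r + ‖y - yb‖ ^ r) - Vhat x xb + Vhat y yb)
    (κ : ℝ) (hκ : 0 < κ) (hκβ : (1 + κ) * (r - 1) ≤ β) :
    ∀ x xt z y yt w : EuclideanSpace ℝ (Fin d),
      ‖x - xt‖ ^ (r - 2) * (2 * ⟪x - xt, f x y - f z w⟫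
          + (r - 1) * frobNorm (g x y - g z w) ^ 2)
        ≤ K₅ * (‖x - xt‖ ^ r + ‖y - yt‖ ^ r) - Vhat x xt + Vhat y yt
          + 2 * K₄ * ‖x - xt‖ ^ (r - 1) * (‖xt - z‖ + ‖yt - w‖)
              * (1 + ‖xt‖ ^ α + ‖yt‖ ^ α + ‖z‖ ^ α + ‖w‖ ^ α)
          + (1 + 1 / κ) * (r - 1) * K₄ * ‖x - xt‖ ^ (r - 2)
              * (‖xt - z‖ ^ 2 + ‖yt - w‖ ^ 2)
              * (1 + ‖xt‖ ^ α + ‖yt‖ ^ α + ‖z‖ ^ α + ‖w‖ ^ α) :=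
  stmt16_general d m f g α K₄ hH5f hH5g r β K₅ hr Vhat hH6 κ hκ hκβ
end
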